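/- arXiv:2503.10830 — 5 statements merged into one kernel-verified Lean document; each statement's English description precedes it below -/
import Mathlib

section
/- Let k ≥ 2. Consider the graph G on 2k+1 vertices consisting of k 'guard' vertices forming a clique, k+1 'standard' vertices forming an independent set, and all edges between guards and standards. With binary utilities (utility 1 for each friend in the same part), every balanced partition of the vertices into k parts (parts of sizes differing by at most one) contains some agent whose utility is strictly less than its maximin share, where the maximin share of an agent a is the maximum over all balanced k-partitions of the minimum over parts of the number of friends of a in that part. -/
open Finset

variable {V : Type*} [Fintype V] [DecidableEq V]

/-- The `i`-th part of the `k`-partition given by `π`. -/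
def cell {k : ℕ} (π : V → Fin k) (i : Fin k) : Finset V :=
  Finset.univ.filter fun v => π v = i

/-- A `k`-partition is balanced if every part has size `⌊n/k⌋` or `⌈n/k⌉`. -/
def IsBalanced {k : ℕ} (π : V → Fin k) : Prop :=
  ∀ i : Fin k, Fintype.card V / k ≤ (cell π i).card ∧
    (cell π i).card ≤ (Fintype.card V + k - 1) / k

/-- Binary utility: the number of friends (neighbors) of `a` in `S`. -/
def butil (G : SimpleGraph V) [DecidableRel G.Adj] (a : V) (S : Finset V) : ℕ :=
  (S.filter fun b => G.Adj a b).card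

/-- The maximin share of agent `a`: the largest `m` such that some balanced
`k`-partition gives `a` at least `m` friends in every part. -/
noncomputable def mmsShare (G : SimpleGraph V) [DecidableRel G.Adj] (k : ℕ) (a : V) : ℕ :=
  sSup {m : ℕ | ∃ π : V → Fin k, IsBalanced π ∧ ∀ i : Fin k, m ≤ butil G a (cell π i)}

/-- Guards are the first `k` vertices (forming a clique); standards are the remaining
`k+1` vertices (an independent set); every guard is adjacent to every standard. -/
def guardGraph (k : ℕ) : SimpleGraph (Fin (2 * k + 1)) where
  Adj u v := u ≠ v ∧ (u.val < k ∨ v.val < k)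
  symm := ⟨fun u v h => ⟨h.1.symm, h.2.symm⟩⟩
  loopless := ⟨fun u h => h.1 rfl⟩

instance (k : ℕ) : DecidableRel (guardGraph k).Adj :=
  fun u v => inferInstanceAs (Decidable (u ≠ v ∧ (u.val < k ∨ v.val < k)))

/-!
Every balanced `k`-partition of the `2k + 1` vertices has parts of size 2 or 3, so some part
has size 2. If every part contains a guard, the guard in a part of size 2 gets one friend,
although it can get two friends in every part of a partition in which it sits in a part of
size 3. Otherwise a standard in a part without guards gets no friend, although it can get one
in every part of a partition pairing each guard with a standard.
-/

omit [DecidableEq V] in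
@[simp]
lemma mem_cell {k : ℕ} (π : V → Fin k) (i : Fin k) (v : V) : v ∈ cell π i ↔ π v = i := by
  simp [cell]

omit [DecidableEq V] in
lemma sum_card_cell {k : ℕ} (π : V → Fin k) : ∑ i, (cell π i).card = Fintype.card V :=
  (card_eq_sum_card_fiberwise fun v _ => mem_univ (π v)).symm

omit [DecidableEq V] in
lemma le_mmsShare (G : SimpleGraph V) [DecidableRel G.Adj] {k : ℕ} (hk : 0 < k) {a : V}
    {m : ℕ} {π : V → Fin k} (hπ : IsBalanced π) (h : ∀ i, m ≤ butil G a (cell π i)) :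
    m ≤ mmsShare G k a := by
  refine le_csSup ⟨Fintype.card V, ?_⟩ ⟨π, hπ, h⟩
  rintro m' ⟨π', -, h'⟩
  calc m' ≤ butil G a (cell π' ⟨0, hk⟩) := h' _
    _ ≤ (cell π' ⟨0, hk⟩).card := card_filter_le _ _
    _ ≤ Fintype.card V := card_le_univ _

section GuardGraph

variable {k : ℕ}

lemma isBalanced_iff_card_cell (hk : 2 ≤ k) (π : Fin (2 * k + 1) → Fin k) :
    IsBalanced π ↔ ∀ i, 2 ≤ (cell π i).card ∧ (cell π i).card ≤ 3 := by
  have hlow : (2 * k + 1) / k = 2 := Nat.div_eq_of_lt_le (by omega) (by omega)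
  have hhigh : (2 * k + 1 + k - 1) / k = 3 := by
    rw [show 2 * k + 1 + k - 1 = 3 * k by omega, Nat.mul_div_cancel _ (by omega)]
  rw [IsBalanced, Fintype.card_fin, hlow, hhigh]

lemma exists_card_cell_eq_two (hk : 2 ≤ k) {π : Fin (2 * k + 1) → Fin k}
    (hπ : IsBalanced π) : ∃ i, (cell π i).card = 2 := by
  by_contra! hne
  have hthree (i : Fin k) : (cell π i).card = 3 := by
    have := (isBalanced_iff_card_cell hk π).1 hπ i
    have := hne i
    omega
  have := sum_card_cell π
  simp only [hthree, sum_const, card_univ, Fintype.card_fin, smul_eq_mul] at this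
  omega

lemma butil_guardGraph_of_lt {g : Fin (2 * k + 1)} (hg : g.val < k)
    (S : Finset (Fin (2 * k + 1))) : butil (guardGraph k) g S = (S.erase g).card := by
  rw [butil, ← filter_ne' S g]
  exact congrArg card <|
    filter_congr fun b _ => ⟨fun h => h.1.symm, fun h => ⟨Ne.symm h, Or.inl hg⟩⟩

lemma butil_guardGraph_eq_zero {a : Fin (2 * k + 1)} (ha : k ≤ a.val)
    {S : Finset (Fin (2 * k + 1))} (hS : ∀ b ∈ S, k ≤ b.val) :
    butil (guardGraph k) a S = 0 := by
  rw [butil, card_eq_zero, filter_eq_empty_iff]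
  rintro b hb ⟨-, h | h⟩ <;> have := hS b hb <;> omega

/-- Guard `i` and standard `k + i` form part `i`; the last standard joins part `j`. -/
def pairPartition (j : Fin k) (v : Fin (2 * k + 1)) : Fin k :=
  if h : v.val < k then ⟨v, h⟩ else if h' : v.val < 2 * k then ⟨v - k, by omega⟩ else j

lemma guard_mem_cell_pairPartition (j i : Fin k) :
    (⟨i, by omega⟩ : Fin (2 * k + 1)) ∈ cell (pairPartition j) i := by
  simp [pairPartition]

lemma standard_mem_cell_pairPartition (j i : Fin k) :
    (⟨k + i, by omega⟩ : Fin (2 * k + 1)) ∈ cell (pairPartition j) i := by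
  rw [mem_cell, pairPartition, dif_neg (by simp), dif_pos (by simp only; omega)]
  exact Fin.ext (Nat.add_sub_cancel_left ..)

lemma last_mem_cell_pairPartition (j : Fin k) :
    Fin.last (2 * k) ∈ cell (pairPartition j) j := by
  have hlast : ¬(Fin.last (2 * k)).val < 2 * k := by simp
  rw [mem_cell, pairPartition, dif_neg (by omega), dif_neg hlast]

lemma cell_pairPartition_subset (j i : Fin k) :
    cell (pairPartition j) i ⊆ {⟨i, by omega⟩, ⟨k + i, by omega⟩, Fin.last (2 * k)} := by
  intro v hv
  have := v.isLt
  simp only [mem_cell, pairPartition] at hv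
  simp only [mem_insert, mem_singleton, Fin.ext_iff, Fin.val_last]
  split_ifs at hv <;> simp only [Fin.ext_iff] at hv <;> omega

lemma two_le_card_cell_pairPartition (j i : Fin k) : 2 ≤ (cell (pairPartition j) i).card := by
  refine le_trans ?_ (card_le_card (insert_subset (guard_mem_cell_pairPartition j i)
    (singleton_subset_iff.2 (standard_mem_cell_pairPartition j i))))
  rw [card_pair (by simp [Fin.ext_iff, i.pos.ne'])]

lemma isBalanced_pairPartition (hk : 2 ≤ k) (j : Fin k) : IsBalanced (pairPartition j) :=
  (isBalanced_iff_card_cell hk _).2 fun i =>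
    ⟨two_le_card_cell_pairPartition j i,
      (card_le_card (cell_pairPartition_subset j i)).trans card_le_three⟩

lemma one_le_mmsShare_standard (hk : 2 ≤ k) {a : Fin (2 * k + 1)} (ha : k ≤ a.val) :
    1 ≤ mmsShare (guardGraph k) k a := by
  refine le_mmsShare _ (by omega) (isBalanced_pairPartition hk ⟨0, by omega⟩) fun i => ?_
  have hai : a ≠ ⟨i, by omega⟩ := Fin.ne_of_val_ne (by simp only; omega)
  exact card_pos.2 ⟨⟨i, by omega⟩,
    mem_filter.2 ⟨guard_mem_cell_pairPartition _ i, hai, Or.inr i.isLt⟩⟩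

lemma two_le_mmsShare_guard (hk : 2 ≤ k) {g : Fin (2 * k + 1)} (hg : g.val < k) :
    2 ≤ mmsShare (guardGraph k) k g := by
  set j : Fin k := ⟨g, hg⟩
  refine le_mmsShare _ (by omega) (isBalanced_pairPartition hk j) fun i => ?_
  rw [butil_guardGraph_of_lt hg]
  by_cases hgi : g ∈ cell (pairPartition j) i
  · have hij : i = j := ((mem_cell _ _ _).1 hgi).symm.trans (dif_pos hg)
    rw [hij] at hgi ⊢
    have hstd : (⟨k + g, by omega⟩ : Fin (2 * k + 1)) ≠ g := Fin.ne_of_val_ne (by simp; omega)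
    have hlast : Fin.last (2 * k) ≠ g := Fin.ne_of_val_ne (by simp; omega)
    have hsub : {⟨k + g, by omega⟩, Fin.last (2 * k)} ⊆ (cell (pairPartition j) j).erase g :=
      insert_subset (mem_erase.2 ⟨hstd, standard_mem_cell_pairPartition j j⟩)
        (singleton_subset_iff.2 (mem_erase.2 ⟨hlast, last_mem_cell_pairPartition j⟩))
    have hpair : (⟨k + g, by omega⟩ : Fin (2 * k + 1)) ≠ Fin.last (2 * k) :=
      Fin.ne_of_val_ne (by simp; omega)
    exact (card_pair hpair).symm.le.trans (card_le_card hsub)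
  · rw [erase_eq_of_notMem hgi]
    exact two_le_card_cell_pairPartition j i

end GuardGraph

/-- In the guards/standards instance, no balanced `k`-partition is MMS: some agent
receives strictly less than its maximin share. -/
theorem stmt0 (k : ℕ) (hk : 2 ≤ k) (π : Fin (2 * k + 1) → Fin k) (hπ : IsBalanced π) :
    ∃ a : Fin (2 * k + 1),
      butil (guardGraph k) a (cell π (π a)) < mmsShare (guardGraph k) k a := by
  by_cases hguards : ∀ i, ∃ g ∈ cell π i, g.val < k
  · obtain ⟨i, hi⟩ := exists_card_cell_eq_two hk hπ
    obtain ⟨g, hgi, hg⟩ := hguards i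
    refine ⟨g, ?_⟩
    rw [(mem_cell π i g).1 hgi, butil_guardGraph_of_lt hg, card_erase_of_mem hgi, hi]
    exact two_le_mmsShare_guard hk hg
  · push Not at hguards
    obtain ⟨i, hi⟩ := hguards
    obtain ⟨a, hai⟩ : (cell π i).Nonempty :=
      card_pos.1 (by have := ((isBalanced_iff_card_cell hk π).1 hπ i).1; omega)
    refine ⟨a, ?_⟩
    rw [(mem_cell π i a).1 hai, butil_guardGraph_eq_zero (hi a hai) hi]
    exact one_le_mmsShare_standard hk (hi a hai)
end

section
/- Let k ≥ 2 and let G be the complete graph on 2k vertices with binary utilities. Then every balanced k-partition of G is envy-free, but no balanced k-partition of G is proportional. -/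
/-! In a balanced `k`-partition of `2k` agents every part is a pair. On the complete graph each
agent therefore has exactly one friend in her own part and at most one in any other part once the
envied agent is removed, so there is no envy; yet her proportional share is `(2k - 1) / k > 1`. -/

open Finset

variable {V : Type*} [Fintype V] [DecidableEq V]

/-- Envy-freeness for binary utilities. -/
def IsEF (G : SimpleGraph V) [DecidableRel G.Adj] {k : ℕ} (π : V → Fin k) : Prop :=
  ∀ a b : V, butil G a ((cell π (π b)).erase b) ≤ butil G a (cell π (π a))

/-- Proportionality for binary utilities: `u_a(π(a)) ≥ deg(a)/k`. -/
def IsPROP (G : SimpleGraph V) [DecidableRel G.Adj] {k : ℕ} (π : V → Fin k) : Prop :=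
  ∀ a : V, G.degree a ≤ k * butil G a (cell π (π a))

theorem butil_top {α : Type*} [DecidableEq α] (a : α) (S : Finset α) :
    butil ⊤ a S = (S.erase a).card := by
  simp only [butil, SimpleGraph.top_adj, Finset.filter_ne]

section Partition

variable {α : Type*} [Fintype α] {k : ℕ} (π : α → Fin k)

theorem mem_cell_self (a : α) : a ∈ cell π (π a) := by
  simp [cell]

theorem card_cell_eq_of_isBalanced {m : ℕ} (hk : 0 < k) (hα : Fintype.card α = m * k)
    (hπ : IsBalanced π) (i : Fin k) : (cell π i).card = m := by
  have hceil : (m * k + k - 1) / k = m := Nat.div_eq_of_lt_le (by lia) (by lia)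
  have := hπ i
  rw [hα, Nat.mul_div_cancel _ hk, hceil] at this
  lia

variable [DecidableEq α]

theorem butil_top_cell_self (a : α) :
    butil ⊤ a (cell π (π a)) = (cell π (π a)).card - 1 := by
  rw [butil_top, Finset.card_erase_of_mem (mem_cell_self π a)]

theorem isEF_top_of_card_cell_eq {c : ℕ} (hc : ∀ i, (cell π i).card = c) :
    IsEF ⊤ π := by
  intro a b
  calc butil ⊤ a ((cell π (π b)).erase b)
      ≤ ((cell π (π b)).erase b).card := Finset.card_filter_le _ _
    _ = butil ⊤ a (cell π (π a)) := by
      rw [Finset.card_erase_of_mem (mem_cell_self π b), butil_top_cell_self, hc, hc]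

theorem isPROP_top_iff :
    IsPROP ⊤ π ↔ ∀ a, Fintype.card α - 1 ≤ k * ((cell π (π a)).card - 1) := by
  simp only [IsPROP, butil_top_cell_self, SimpleGraph.complete_graph_degree]

end Partition

/-- On the complete graph with `2k` vertices, every balanced `k`-partition is
envy-free but no balanced `k`-partition is proportional. -/
theorem stmt2 (k : ℕ) (hk : 2 ≤ k) (π : Fin (2 * k) → Fin k) (hπ : IsBalanced π) :
    IsEF (⊤ : SimpleGraph (Fin (2 * k))) π ∧
      ¬ IsPROP (⊤ : SimpleGraph (Fin (2 * k))) π := by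
  have hcell : ∀ i, (cell π i).card = 2 :=
    card_cell_eq_of_isBalanced π (by lia) (Fintype.card_fin _) hπ
  refine ⟨isEF_top_of_card_cell_eq π hcell, fun hprop => ?_⟩
  have := (isPROP_top_iff π).1 hprop ⟨0, by lia⟩
  rw [hcell, Fintype.card_fin] at this
  lia
end

section
/- Let k ≥ 2 and let G be a star with center c and k leaves, with binary utilities. Then G admits no proportional balanced k-partition (since each leaf's PROP-share is 1/k > 0 but not all k leaves can be in the same part as c in a balanced partition with k+1 agents), while an MMS balanced k-partition exists. -/
open Finset

variable {V : Type*} [Fintype V] [DecidableEq V]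

/-- MMS partition: every agent gets at least its maximin share. -/
def IsMMS (G : SimpleGraph V) [DecidableRel G.Adj] {k : ℕ} (π : V → Fin k) : Prop :=
  ∀ a : V, mmsShare G k a ≤ butil G a (cell π (π a))

/-- A star with center (vertex `0`) and `k` leaves. -/
def starGraph (k : ℕ) : SimpleGraph (Fin (k + 1)) where
  Adj u v := u ≠ v ∧ (u.val = 0 ∨ v.val = 0)
  symm := ⟨fun u v h => ⟨h.1.symm, h.2.symm⟩⟩
  loopless := ⟨fun u h => h.1 rfl⟩

instance (k : ℕ) : DecidableRel (starGraph k).Adj :=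
  fun u v => inferInstanceAs (Decidable (u ≠ v ∧ (u.val = 0 ∨ v.val = 0)))

/-! A proportional partition must put every leaf with the centre, its only friend, so one part
would hold all `k + 1 ≥ 3` agents. For the maximin shares: some part of any balanced partition
has at most one agent, so the centre's share is at most `1`, and some part misses the centre, so
a leaf's share is `0`. Hence pairing the centre with one leaf is an MMS partition. -/

section General

variable {α : Type*}

theorem butil_le_card (G : SimpleGraph α) [DecidableRel G.Adj] (a : α) (S : Finset α) :
    butil G a S ≤ #S :=
  card_filter_le _ _

theorem butil_eq_zero_iff (G : SimpleGraph α) [DecidableRel G.Adj] (a : α) (S : Finset α) :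
    butil G a S = 0 ↔ ∀ b ∈ S, ¬G.Adj a b :=
  card_filter_eq_zero_iff

variable [Fintype α] {k : ℕ}

theorem isBalanced_iff_of_card_eq_succ (hk : 2 ≤ k) (hα : Fintype.card α = k + 1)
    (π : α → Fin k) : IsBalanced π ↔ ∀ i, 1 ≤ #(cell π i) ∧ #(cell π i) ≤ 2 := by
  have hlow : (k + 1) / k = 1 := Nat.div_eq_of_lt_le (by omega) (by omega)
  have hhigh : (k + 1 + k - 1) / k = 2 := Nat.div_eq_of_lt_le (by omega) (by omega)
  rw [IsBalanced, hα, hlow, hhigh]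

theorem exists_card_cell_le_one (hα : Fintype.card α < 2 * k) (π : α → Fin k) :
    ∃ i, #(cell π i) ≤ 1 := by
  obtain ⟨i, hi⟩ := Fintype.exists_card_fiber_lt_of_card_lt_mul (f := π)
    (by rwa [Fintype.card_fin, mul_comm])
  exact ⟨i, Nat.le_of_lt_succ hi⟩

theorem mmsShare_le_of_forall_exists {G : SimpleGraph α} [DecidableRel G.Adj] {a : α} {m : ℕ}
    (h : ∀ π : α → Fin k, IsBalanced π → ∃ i, butil G a (cell π i) ≤ m) :
    mmsShare G k a ≤ m := by
  refine csSup_le' ?_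
  rintro m' ⟨π, hπ, hm'⟩
  obtain ⟨i, hi⟩ := h π hπ
  exact (hm' i).trans hi

theorem IsPROP.exists_adj_cell {G : SimpleGraph α} [DecidableRel G.Adj] {π : α → Fin k}
    (hπ : IsPROP G π) {a : α} (ha : 0 < G.degree a) : ∃ b, G.Adj a b ∧ π b = π a := by
  have hpos : 0 < butil G a (cell π (π a)) :=
    Nat.pos_of_ne_zero fun h0 => by have := hπ a; rw [h0] at this; omega
  obtain ⟨b, hb⟩ := card_pos.mp hpos
  simp only [cell, mem_filter, mem_univ, true_and] at hb
  exact ⟨b, hb.2, hb.1⟩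

end General

section Star

variable {k : ℕ}

theorem starGraph_adj_iff_of_ne_zero {v : Fin (k + 1)} (hv : v ≠ 0) (b : Fin (k + 1)) :
    (starGraph k).Adj v b ↔ b = 0 := by
  change v ≠ b ∧ (v.val = 0 ∨ b.val = 0) ↔ b = 0
  rw [Fin.val_eq_zero_iff, Fin.val_eq_zero_iff]
  constructor
  · rintro ⟨-, h | h⟩
    exacts [absurd h hv, h]
  · rintro rfl
    exact ⟨hv, Or.inr rfl⟩

theorem IsPROP.starGraph_eq {π : Fin (k + 1) → Fin k} (hπ : IsPROP (starGraph k) π)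
    (v : Fin (k + 1)) : π v = π 0 := by
  by_cases hv : v = 0
  · rw [hv]
  have hdeg : 0 < (starGraph k).degree v :=
    (starGraph k).degree_pos_iff_exists_adj v |>.mpr
      ⟨0, (starGraph_adj_iff_of_ne_zero hv 0).mpr rfl⟩
  obtain ⟨b, hadj, hb⟩ := hπ.exists_adj_cell hdeg
  rw [(starGraph_adj_iff_of_ne_zero hv b).mp hadj] at hb
  exact hb.symm

theorem not_isBalanced_and_isPROP_starGraph (hk : 2 ≤ k) (π : Fin (k + 1) → Fin k) :
    ¬(IsBalanced π ∧ IsPROP (starGraph k) π) := by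
  rintro ⟨hbal, hprop⟩
  have hcell : cell π (π 0) = univ := by
    ext v
    simp [cell, hprop.starGraph_eq v]
  have := ((isBalanced_iff_of_card_eq_succ hk (Fintype.card_fin _) π).mp hbal (π 0)).2
  rw [hcell, card_univ, Fintype.card_fin] at this
  omega

theorem mmsShare_starGraph_zero_le_one (hk : 2 ≤ k) : mmsShare (starGraph k) k 0 ≤ 1 :=
  mmsShare_le_of_forall_exists fun π _ => by
    obtain ⟨i, hi⟩ := exists_card_cell_le_one (by rw [Fintype.card_fin]; omega) π
    exact ⟨i, (butil_le_card _ _ _).trans hi⟩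

theorem mmsShare_starGraph_eq_zero (hk : 2 ≤ k) {a : Fin (k + 1)} (ha : a ≠ 0) :
    mmsShare (starGraph k) k a = 0 :=
  Nat.le_zero.mp <| mmsShare_le_of_forall_exists fun π _ => by
    obtain ⟨i, hi⟩ := Fintype.exists_ne_of_one_lt_card (by rw [Fintype.card_fin]; omega) (π 0)
    refine ⟨i, ((butil_eq_zero_iff _ _ _).mpr fun b hb hadj => ?_).le⟩
    rw [(starGraph_adj_iff_of_ne_zero ha b).mp hadj] at hb
    exact hi (mem_filter.mp hb).2.symm

-- Truncated subtraction sends both the centre `0` and leaf `1` to part `0`.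
def centrePairPartition (hk : 0 < k) (v : Fin (k + 1)) : Fin k :=
  ⟨v.val - 1, by omega⟩

theorem centrePairPartition_isBalanced (hk : 2 ≤ k) :
    IsBalanced (centrePairPartition (k := k) (by omega)) := by
  refine (isBalanced_iff_of_card_eq_succ hk (Fintype.card_fin _) _).mpr fun i => ⟨?_, ?_⟩
  · refine card_pos.mpr ⟨⟨i.val + 1, by omega⟩, ?_⟩
    simp [cell, centrePairPartition, Fin.ext_iff]
  · have hsub :
        cell (centrePairPartition (k := k) (by omega)) i ⊆ {0, ⟨i.val + 1, by omega⟩} := by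
      intro v hv
      simp only [cell, centrePairPartition, mem_filter, mem_univ, true_and, Fin.ext_iff] at hv
      simp only [mem_insert, mem_singleton, Fin.ext_iff, Fin.val_zero]
      omega
    exact (card_le_card hsub).trans (card_insert_le _ _)

theorem one_le_butil_centrePairPartition (hk : 0 < k) :
    1 ≤ butil (starGraph k) 0 (cell (centrePairPartition hk) (centrePairPartition hk 0)) := by
  refine card_pos.mpr ⟨⟨1, by omega⟩, ?_⟩
  simp only [cell, mem_filter, mem_univ, true_and]
  exact ⟨Fin.ext rfl, by simp [Fin.ext_iff], Or.inl (Fin.val_zero _)⟩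

theorem centrePairPartition_isMMS (hk : 2 ≤ k) :
    IsMMS (starGraph k) (centrePairPartition (k := k) (by omega)) := by
  intro a
  by_cases ha : a = 0
  · subst ha
    exact (mmsShare_starGraph_zero_le_one hk).trans (one_le_butil_centrePairPartition _)
  · rw [mmsShare_starGraph_eq_zero hk ha]
    exact Nat.zero_le _

end Star

/-- The star with center and `k` leaves admits no proportional balanced `k`-partition,
but admits an MMS balanced `k`-partition. -/
theorem stmt5 (k : ℕ) (hk : 2 ≤ k) :
    (¬ ∃ π : Fin (k + 1) → Fin k, IsBalanced π ∧ IsPROP (starGraph k) π) ∧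
      ∃ π : Fin (k + 1) → Fin k, IsBalanced π ∧ IsMMS (starGraph k) π :=
  ⟨fun ⟨π, h⟩ => not_isBalanced_and_isPROP_starGraph hk π h,
    ⟨_, centrePairPartition_isBalanced hk, centrePairPartition_isMMS hk⟩⟩
end

section
/- If G is a path on n vertices with binary utilities and ⌊n/k⌋ ≥ 2, then the balanced k-partition into k contiguous sub-paths is proportional and envy-free (each agent has at least one neighbor in its own part, and each agent has at most 2 friends, of which at most one lies in any other part). -/
/-!
Every part of a balanced partition has at least `⌊n/k⌋ ≥ 2` vertices, so by contiguity each
agent has a neighbour in its own part. Its at most two neighbours lie on opposite sides of it,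
so a part not containing it holds at most one of them. Hence no agent values any part more than
its own, which gives envy-freeness, and proportionality follows by summing over the `k` parts,
since the utilities of the parts add up to the degree. The partition `x ↦ ⌊x k / n⌋` is
contiguous, and its `i`-th part is the interval `[⌈i n / k⌉, ⌈(i + 1) n / k⌉)`, whose length
lies between `⌊n/k⌋` and `⌈n/k⌉`.
-/

open Finset

variable {V : Type*} [Fintype V] [DecidableEq V]

/-- The path graph on `Fin n`: `u` and `v` are adjacent iff they are consecutive. -/
def pathGraph (n : ℕ) : SimpleGraph (Fin n) where
  Adj u v := u.val + 1 = v.val ∨ v.val + 1 = u.val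
  symm := ⟨fun u v h => h.symm⟩
  loopless := ⟨fun u h => by rcases h with h | h <;> omega⟩

instance (n : ℕ) : DecidableRel (pathGraph n).Adj :=
  fun u v => inferInstanceAs (Decidable (u.val + 1 = v.val ∨ v.val + 1 = u.val))

def IsContiguous {α β : Type*} [Preorder α] (π : α → β) : Prop :=
  ∀ x y z : α, x ≤ y → y ≤ z → π x = π z → π y = π x

section Contiguous

variable {α β : Type*} {π : α → β}

lemma Monotone.isContiguous [Preorder α] [PartialOrder β] (h : Monotone π) :
    IsContiguous π :=
  fun _ _ _ hxy hyz hxz => le_antisymm (hxz ▸ h hyz) (h hxy)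

lemma IsContiguous.apply_eq_of_mem_uIcc [LinearOrder α] (hπ : IsContiguous π) {a b c : α}
    (hab : π a = π b) (hc : c ∈ Set.uIcc a b) : π c = π a := by
  rcases Set.mem_uIcc.mp hc with ⟨hac, hcb⟩ | ⟨hbc, hca⟩
  · exact hπ a c b hac hcb hab
  · exact (hπ b c a hbc hca hab.symm).trans hab.symm

end Contiguous

section Utility

variable {W : Type*} (G : SimpleGraph W) [DecidableRel G.Adj]

lemma butil_mono (a : W) {S T : Finset W} (h : S ⊆ T) : butil G a S ≤ butil G a T :=
  card_le_card (filter_subset_filter _ h)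

variable [Fintype W] {k : ℕ} (π : W → Fin k)

lemma sum_butil_cell (a : W) : ∑ j, butil G a (cell π j) = G.degree a := by
  rw [← G.card_neighborFinset_eq_degree, G.neighborFinset_eq_filter,
    card_eq_sum_card_fiberwise (f := π) (t := univ) fun _ _ => mem_univ _]
  simp only [butil, cell, filter_comm]

lemma isPROP_of_butil_cell_le (h : ∀ a j, butil G a (cell π j) ≤ butil G a (cell π (π a))) :
    IsPROP G π := fun a =>
  calc G.degree a = ∑ j, butil G a (cell π j) := (sum_butil_cell G π a).symm
    _ ≤ ∑ _j : Fin k, butil G a (cell π (π a)) := sum_le_sum fun j _ => h a j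
    _ = k * butil G a (cell π (π a)) := by simp

lemma isEF_of_butil_cell_le [DecidableEq W]
    (h : ∀ a j, butil G a (cell π j) ≤ butil G a (cell π (π a))) : IsEF G π := fun a b =>
  (butil_mono G a (erase_subset _ _)).trans (h a (π b))

end Utility

section Path

variable {n : ℕ}

lemma pathGraph_adj_iff {a b : Fin n} :
    (pathGraph n).Adj a b ↔ a.val + 1 = b.val ∨ b.val + 1 = a.val :=
  Iff.rfl

lemma pathGraph_exists_adj_mem_uIcc {a b : Fin n} (hab : a ≠ b) :
    ∃ c ∈ Set.uIcc a b, (pathGraph n).Adj a c := by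
  rcases hab.lt_or_gt with h | h
  · refine ⟨⟨a + 1, by omega⟩, Set.mem_uIcc.mpr (.inl ⟨?_, ?_⟩), .inl rfl⟩ <;>
      simp only [Fin.le_def] <;> omega
  · refine ⟨⟨a - 1, by omega⟩, Set.mem_uIcc.mpr (.inr ⟨?_, ?_⟩), .inr ?_⟩ <;>
      simp only [Fin.le_def, Fin.lt_def] at h ⊢ <;> omega

lemma pathGraph_mem_uIcc_of_adj {a c d : Fin n} (hc : (pathGraph n).Adj a c)
    (hd : (pathGraph n).Adj a d) (hcd : c ≠ d) : a ∈ Set.uIcc c d := by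
  rw [pathGraph_adj_iff] at hc hd
  rw [Ne, Fin.ext_iff] at hcd
  simp only [Set.mem_uIcc, Fin.le_def]
  omega

variable {k : ℕ} {π : Fin n → Fin k}

lemma one_le_butil_pathGraph_cell_self (hπ : IsContiguous π) {a : Fin n}
    (hcard : 2 ≤ (cell π (π a)).card) : 1 ≤ butil (pathGraph n) a (cell π (π a)) := by
  obtain ⟨b, hb, hba⟩ := exists_mem_ne hcard a
  obtain ⟨c, hc, hac⟩ := pathGraph_exists_adj_mem_uIcc (Ne.symm hba)
  have hπb : π b = π a := by simpa [cell] using hb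
  have hπc : π c = π a := hπ.apply_eq_of_mem_uIcc hπb.symm hc
  exact card_pos.mpr ⟨c, by simp [cell, hπc, hac]⟩

lemma butil_pathGraph_cell_le_one (hπ : IsContiguous π) {a : Fin n} {j : Fin k}
    (hj : π a ≠ j) : butil (pathGraph n) a (cell π j) ≤ 1 := by
  refine card_le_one.mpr fun c hc d hd => by_contra fun hcd => hj ?_
  simp only [cell, mem_filter, mem_univ, true_and] at hc hd
  calc π a = π c := hπ.apply_eq_of_mem_uIcc (hc.1.trans hd.1.symm)
        (pathGraph_mem_uIcc_of_adj hc.2 hd.2 hcd)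
    _ = j := hc.1

lemma butil_pathGraph_cell_le_cell_self (hπ : IsContiguous π)
    (hcard : ∀ i, 2 ≤ (cell π i).card) (a : Fin n) (j : Fin k) :
    butil (pathGraph n) a (cell π j) ≤ butil (pathGraph n) a (cell π (π a)) := by
  rcases eq_or_ne (π a) j with rfl | hj
  · rfl
  · exact (butil_pathGraph_cell_le_one hπ hj).trans
      (one_le_butil_pathGraph_cell_self hπ (hcard _))

end Path

section Balanced

lemma Nat.add_div_le_div_add_ceilDiv {c : ℕ} (hc : 0 < c) (a b : ℕ) :
    (a + b) / c ≤ a / c + b ⌈/⌉ c := by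
  have hmod := Nat.mod_lt a hc
  calc (a + b) / c = (c * (a / c) + (a % c + b)) / c := by rw [← add_assoc, Nat.div_add_mod]
    _ = a / c + (a % c + b) / c := Nat.mul_add_div hc _ _
    _ ≤ a / c + (b + c - 1) / c := by gcongr; omega

lemma Nat.ceilDiv_add_sub_ceilDiv_mem_Icc {c : ℕ} (hc : 0 < c) (a b : ℕ) :
    (a + b) ⌈/⌉ c - a ⌈/⌉ c ∈ Set.Icc (b / c) (b ⌈/⌉ c) := by
  simp only [Nat.ceilDiv_eq_add_pred_div]
  have hshift : a + b + c - 1 = (a + c - 1) + b := by omega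
  have hlow := Nat.div_add_div_le_add_div (x := a + c - 1) (y := b) (z := c)
  have hhigh := Nat.add_div_le_div_add_ceilDiv hc (a + c - 1) b
  rw [hshift]
  exact ⟨Nat.le_sub_of_add_le' hlow, Nat.sub_le_iff_le_add'.mpr hhigh⟩

variable (n : ℕ) {k : ℕ} (hk : 0 < k)

def contiguousPart (x : Fin n) : Fin k :=
  ⟨x * k / n, Nat.div_lt_of_lt_mul (Nat.mul_lt_mul_of_pos_right x.isLt hk)⟩

lemma contiguousPart_monotone : Monotone (contiguousPart n hk) := fun _ _ hxy =>
  Fin.le_def.mpr (Nat.div_le_div_right (Nat.mul_le_mul_right k hxy))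

lemma contiguousPart_eq_iff (x : Fin n) (i : Fin k) :
    contiguousPart n hk x = i ↔ (i * n) ⌈/⌉ k ≤ x ∧ x < ((i + 1) * n) ⌈/⌉ k := by
  have hn : 0 < n := x.pos
  have hlow : (i : ℕ) ≤ x * k / n ↔ i * n ≤ x * k := Nat.le_div_iff_mul_le hn
  have hhigh : x * k / n < i + 1 ↔ x * k < (i + 1) * n := Nat.div_lt_iff_lt_mul hn
  rw [Fin.ext_iff, ← not_le, ceilDiv_le_iff_le_mul hk, ceilDiv_le_iff_le_mul hk, mul_comm k]
  simp only [contiguousPart]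
  omega

lemma card_cell_contiguousPart (i : Fin k) :
    (cell (contiguousPart n hk) i).card = ((i + 1) * n) ⌈/⌉ k - (i * n) ⌈/⌉ k := by
  have hhi : ((i + 1) * n) ⌈/⌉ k ≤ n :=
    (ceilDiv_le_iff_le_mul hk).mpr (Nat.mul_le_mul_right n i.isLt)
  rw [← Nat.card_Ico, ← card_map Fin.valEmbedding]
  congr 1
  ext m
  simp only [cell, mem_map, mem_filter, mem_univ, true_and, contiguousPart_eq_iff, mem_Ico,
    Fin.valEmbedding_apply]
  exact ⟨fun ⟨x, hx, hxm⟩ => hxm ▸ hx, fun hm => ⟨⟨m, by omega⟩, hm, rfl⟩⟩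

lemma isBalanced_contiguousPart : IsBalanced (contiguousPart n hk) := fun i => by
  have h := Nat.ceilDiv_add_sub_ceilDiv_mem_Icc hk (i * n) n
  rw [← add_one_mul] at h
  simpa [card_cell_contiguousPart, Nat.ceilDiv_eq_add_pred_div] using h

end Balanced

theorem stmt15_general (n k : ℕ) (h2 : 2 ≤ n / k) :
    (∃ π : Fin n → Fin k, IsBalanced π ∧
        ∀ x y z : Fin n, x ≤ y → y ≤ z → π x = π z → π y = π x) ∧
      ∀ π : Fin n → Fin k, IsBalanced π →
        (∀ x y z : Fin n, x ≤ y → y ≤ z → π x = π z → π y = π x) →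
        IsPROP (pathGraph n) π ∧ IsEF (pathGraph n) π := by
  have hk : 0 < k := Nat.pos_of_ne_zero fun hk => by simp [hk] at h2
  refine ⟨⟨contiguousPart n hk, isBalanced_contiguousPart n hk,
    (contiguousPart_monotone n hk).isContiguous⟩, fun π hbal hπ => ?_⟩
  have hcard (i : Fin k) : 2 ≤ (cell π i).card := h2.trans (by simpa using (hbal i).1)
  have h := butil_pathGraph_cell_le_cell_self hπ hcard
  exact ⟨isPROP_of_butil_cell_le _ π h, isEF_of_butil_cell_le _ π h⟩

/-- If `G` is a path on `n` vertices with binary utilities and `⌊n/k⌋ ≥ 2`, then a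
balanced `k`-partition into `k` contiguous sub-paths exists, and every such
contiguous balanced `k`-partition is proportional and envy-free. -/
theorem stmt15 (n k : ℕ) (hk : 0 < k) (h2 : 2 ≤ n / k) :
    (∃ π : Fin n → Fin k, IsBalanced π ∧
        ∀ x y z : Fin n, x ≤ y → y ≤ z → π x = π z → π y = π x) ∧
      ∀ π : Fin n → Fin k, IsBalanced π →
        (∀ x y z : Fin n, x ≤ y → y ≤ z → π x = π z → π y = π x) →
        IsPROP (pathGraph n) π ∧ IsEF (pathGraph n) π :=
  stmt15_general n k h2
end

section
/- Consider a star with center c and 2N leaves a₁,…,a_{2N} where u_c(a_i) = s_i for positive integers s_i with total sum 2B, and k = 2. Then the MMS-share of c equals B if and only if there exists a subset I ⊆ [2N] of size N with Σ_{i∈I} s_i = B (i.e., the Equitable Partition instance is a yes-instance). -/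
/-!
Every balanced partition `(T, Tᶜ)` has part values summing to `2B`, so the smaller part is worth
at most `B`, and a value of exactly `B` is attained precisely when some part of size `N` sums to
`B`. Since the shares are natural numbers bounded by `B`, the supremum is a maximum, so it equals
`B` exactly when `B` itself is a share.
-/

open Finset

lemma Nat.sSup_eq_iff_mem_of_mem_upperBounds {S : Set ℕ} {B : ℕ} (hne : S.Nonempty)
    (hB : B ∈ upperBounds S) : sSup S = B ↔ B ∈ S :=
  ⟨fun h ↦ h ▸ Nat.sSup_mem hne ⟨B, hB⟩, fun h ↦ IsGreatest.csSup_eq ⟨h, hB⟩⟩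

section BalancedShares

variable {α : Type*} [Fintype α] [DecidableEq α]

/-- The maximin share with respect to partitions `(T, Tᶜ)` with `|T| = N` is the supremum of this set. -/
def balancedShares (s : α → ℕ) (N : ℕ) : Set ℕ :=
  {m | ∃ T : Finset α, T.card = N ∧ m ≤ ∑ i ∈ T, s i ∧ m ≤ ∑ i ∈ Tᶜ, s i}

lemma balancedShares_nonempty (s : α → ℕ) {N : ℕ} (hN : N ≤ Fintype.card α) :
    (balancedShares s N).Nonempty := by
  obtain ⟨T, -, hT⟩ := exists_subset_card_eq (s := (univ : Finset α)) hN
  exact ⟨0, T, hT, Nat.zero_le _, Nat.zero_le _⟩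

variable {s : α → ℕ} {B : ℕ}

lemma mem_upperBounds_balancedShares (hsum : ∑ i, s i = 2 * B) (N : ℕ) :
    B ∈ upperBounds (balancedShares s N) := by
  rintro m ⟨T, -, hT, hTc⟩
  have := sum_add_sum_compl T s
  omega

lemma mem_balancedShares_iff (hsum : ∑ i, s i = 2 * B) (N : ℕ) :
    B ∈ balancedShares s N ↔ ∃ I : Finset α, I.card = N ∧ ∑ i ∈ I, s i = B := by
  refine exists_congr fun T ↦ and_congr_right fun _ ↦ ?_
  have := sum_add_sum_compl T s
  omega

end BalancedShares

theorem stmt19_general (N B : ℕ) (s : Fin (2 * N) → ℕ)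
    (hsum : ∑ i, s i = 2 * B) :
    sSup {m : ℕ | ∃ T : Finset (Fin (2 * N)), T.card = N ∧
        m ≤ ∑ i ∈ T, s i ∧ m ≤ ∑ i ∈ Tᶜ, s i} = B ↔
      ∃ I : Finset (Fin (2 * N)), I.card = N ∧ ∑ i ∈ I, s i = B := by
  have hN : N ≤ Fintype.card (Fin (2 * N)) := by simp only [Fintype.card_fin]; omega
  rw [← mem_balancedShares_iff hsum]
  exact Nat.sSup_eq_iff_mem_of_mem_upperBounds (balancedShares_nonempty s hN)
    (mem_upperBounds_balancedShares hsum N)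

/-- Star with center `c` and `2N` leaves with `u_c(aᵢ) = sᵢ > 0` summing to `2B`,
`k = 2`: the MMS-share of the center — the maximum over balanced 2-partitions of the
leaves into two parts of size `N` of the minimum part value — equals `B` iff there
is a subset `I` of size `N` with `∑_{i ∈ I} sᵢ = B`. -/
theorem stmt19 (N B : ℕ) (s : Fin (2 * N) → ℕ) (hs : ∀ i, 0 < s i)
    (hsum : ∑ i, s i = 2 * B) :
    sSup {m : ℕ | ∃ T : Finset (Fin (2 * N)), T.card = N ∧
        m ≤ ∑ i ∈ T, s i ∧ m ≤ ∑ i ∈ Tᶜ, s i} = B ↔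
      ∃ I : Finset (Fin (2 * N)), I.card = N ∧ ∑ i ∈ I, s i = B :=
  stmt19_general N B s hsum
end
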